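/- arXiv:0908.4292 — 5 statements merged into one kernel-verified Lean document; each statement's English description precedes it below -/
import Mathlib

section
/- Fix M > 0 and s ∈ {0,1,2}, set σ = 1 − s², and let ℓ ∈ ℕ₀ with ℓ ≥ s. Let v be a solution of the zero-energy radial equation −(1 − 2M/r) v'' − (2M/r²) v' + (ℓ(ℓ+1)/r² + 2Mσ/r³) v = 0 on (2M, ∞). Then the substitution u(z) := z^{−(1+s)} v(2Mz) transforms this ODE into the hypergeometric equation z(1−z) u'' + [c − (a+b+1)z] u' − ab·u = 0 with parameters a = −ℓ + s, b = ℓ + 1 + s, c = 1 + 2s. -/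
/-!
Write `f t = v (2 * M * t)` and `n = s + 1`. For `u = f / t ^ n` one has
`u' = (t f' - n f) / t ^ (n + 1)` and `u'' = (t ^ 2 f'' - 2 n t f' + n (n + 1) f) / t ^ (n + 2)`,
while `f' = 2M v'(2Mt)` and `f'' = 4M² v''(2Mt)`. Substituting, `z ^ (s + 2)` times the
hypergeometric expression at `z` is exactly the radial equation at `r = 2Mz` multiplied by `r² z`.
-/

open Set Filter Topology

section

variable {𝕜 : Type*} [NontriviallyNormedField 𝕜] {f : 𝕜 → 𝕜} {f' x : 𝕜}

theorem hasDerivAt_div_pow (hf : HasDerivAt f f' x) (hx : x ≠ 0) (n : ℕ) :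
    HasDerivAt (fun t => f t / t ^ n) ((x * f' - n * f x) / x ^ (n + 1)) x := by
  refine (hf.fun_div (hasDerivAt_pow n x) (pow_ne_zero n hx)).congr_deriv ?_
  rcases n with _ | n
  · simp [hx]
  · field_simp
    push_cast
    ring

theorem deriv_div_pow (hf : DifferentiableAt 𝕜 f x) (hx : x ≠ 0) (n : ℕ) :
    deriv (fun t => f t / t ^ n) x = (x * deriv f x - n * f x) / x ^ (n + 1) :=
  (hasDerivAt_div_pow hf.hasDerivAt hx n).deriv

theorem deriv_deriv_div_pow (hf : ∀ᶠ t in 𝓝 x, DifferentiableAt 𝕜 f t)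
    (hf' : DifferentiableAt 𝕜 (deriv f) x) (hx : x ≠ 0) (n : ℕ) :
    deriv (deriv fun t => f t / t ^ n) x =
      (x ^ 2 * deriv (deriv f) x - 2 * n * x * deriv f x + n * (n + 1) * f x) / x ^ (n + 2) := by
  have hderiv : (deriv fun t => f t / t ^ n) =ᶠ[𝓝 x]
      fun t => (t * deriv f t - n * f t) / t ^ (n + 1) := by
    filter_upwards [hf, eventually_ne_nhds hx] with t hft ht
    exact deriv_div_pow hft ht n
  have hnum : HasDerivAt (fun t => t * deriv f t - n * f t)
      (1 * deriv f x + x * deriv (deriv f) x - n * deriv f x) x :=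
    ((hasDerivAt_id x).mul hf'.hasDerivAt).sub (hf.self_of_nhds.hasDerivAt.const_mul _)
  rw [hderiv.deriv_eq, (hasDerivAt_div_pow hnum hx (n + 1)).deriv]
  field_simp
  push_cast
  ring

theorem deriv_deriv_comp_mul_left (c : 𝕜) (f : 𝕜 → 𝕜) (x : 𝕜) :
    deriv (deriv fun t => f (c * t)) x = c ^ 2 * deriv (deriv f) (c * x) := by
  have hderiv : (deriv fun t => f (c * t)) = fun t => c * deriv f (c * t) :=
    funext (deriv_comp_mul_left c f ·)
  rw [hderiv, deriv_const_mul_field, deriv_comp_mul_left c (deriv f), smul_eq_mul]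
  ring

end

theorem hypergeometric_reduction_general
    (M : ℝ) (hM : 0 < M) (s : ℕ)
    (σ : ℝ) (hσ : σ = 1 - (s : ℝ) ^ 2) (ℓ : ℕ)
    (v : ℝ → ℝ) (hv : ContDiffOn ℝ 2 v (Set.Ioi (2 * M)))
    (hODE : ∀ r ∈ Set.Ioi (2 * M),
      -(1 - 2 * M / r) * deriv (deriv v) r - (2 * M / r ^ 2) * deriv v r +
        ((ℓ * (ℓ + 1) : ℝ) / r ^ 2 + 2 * M * σ / r ^ 3) * v r = 0) :
    ∀ z ∈ Set.Ioi (1 : ℝ),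
      z * (1 - z) * deriv (deriv fun t : ℝ => v (2 * M * t) / t ^ (1 + s)) z +
        ((1 + 2 * s : ℝ) - ((-(ℓ : ℝ) + s) + ((ℓ : ℝ) + 1 + s) + 1) * z) *
          deriv (fun t : ℝ => v (2 * M * t) / t ^ (1 + s)) z -
        (-(ℓ : ℝ) + s) * ((ℓ : ℝ) + 1 + s) * (v (2 * M * z) / z ^ (1 + s)) = 0 := by
  intro z hz
  have hz0 : z ≠ 0 := (zero_lt_one.trans hz).ne'
  have hscale : MapsTo (2 * M * ·) (Ioi 1) (Ioi (2 * M)) := fun t (ht : 1 < t) => by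
    simp only [mem_Ioi]
    nlinarith
  have hf : ContDiffOn ℝ 2 (fun t => v (2 * M * t)) (Ioi 1) := hv.comp (by fun_prop) hscale
  have hf1 := hf.differentiableOn two_ne_zero
  have hf2 := (hf.deriv_of_isOpen isOpen_Ioi le_rfl).differentiableOn one_ne_zero
  rw [deriv_div_pow (hf1.differentiableAt (Ioi_mem_nhds hz)) hz0,
    deriv_deriv_div_pow (hf1.eventually_differentiableAt (Ioi_mem_nhds hz))
      (hf2.differentiableAt (Ioi_mem_nhds hz)) hz0,
    deriv_deriv_comp_mul_left, deriv_comp_mul_left, smul_eq_mul]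
  have hODEz := hODE _ (hscale hz)
  subst hσ
  generalize v (2 * M * z) = F₀, deriv v (2 * M * z) = F₁, deriv (deriv v) (2 * M * z) = F₂
    at hODEz ⊢
  have hO : 4 * M ^ 2 * z ^ 2 * (1 - z) * F₂ - 2 * M * z * F₁
      + (ℓ * (ℓ + 1) * z + (1 - s ^ 2)) * F₀ = 0 := by
    field_simp at hODEz
    linear_combination hODEz
  simp only [pow_add, pow_one]
  field_simp
  push_cast
  linear_combination hO

/-- The substitution `u(z) = z^{−(1+s)} v(2Mz)` transforms the zero-energy radial
Regge–Wheeler equation (spin `s`, `σ = 1 − s²`) into the hypergeometric equation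
`z(1−z)u'' + [c − (a+b+1)z]u' − ab·u = 0` with `a = −ℓ+s`, `b = ℓ+1+s`, `c = 1+2s`. -/
theorem hypergeometric_reduction
    (M : ℝ) (hM : 0 < M) (s : ℕ) (hs : s = 0 ∨ s = 1 ∨ s = 2)
    (σ : ℝ) (hσ : σ = 1 - (s : ℝ) ^ 2) (ℓ : ℕ) (hℓs : s ≤ ℓ)
    (v : ℝ → ℝ) (hv : ContDiffOn ℝ 2 v (Set.Ioi (2 * M)))
    (hODE : ∀ r ∈ Set.Ioi (2 * M),
      -(1 - 2 * M / r) * deriv (deriv v) r - (2 * M / r ^ 2) * deriv v r +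
        ((ℓ * (ℓ + 1) : ℝ) / r ^ 2 + 2 * M * σ / r ^ 3) * v r = 0) :
    ∀ z ∈ Set.Ioi (1 : ℝ),
      z * (1 - z) * deriv (deriv fun t : ℝ => v (2 * M * t) / t ^ (1 + s)) z +
        ((1 + 2 * s : ℝ) - ((-(ℓ : ℝ) + s) + ((ℓ : ℝ) + 1 + s) + 1) * z) *
          deriv (fun t : ℝ => v (2 * M * t) / t ^ (1 + s)) z -
        (-(ℓ : ℝ) + s) * ((ℓ : ℝ) + 1 + s) * (v (2 * M * z) / z ^ (1 + s)) = 0 :=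
  hypergeometric_reduction_general M hM s σ hσ ℓ v hv hODE
end

section
/- For the scalar case σ = 1 (s = 0), the function v(r) = (r/(2M))·P_ℓ(r/M − 1), where P_ℓ is the ℓ-th Legendre polynomial, solves the zero-energy equation −(1 − 2M/r) v'' − (2M/r²) v' + (ℓ(ℓ+1)/r² + 2M/r³) v = 0 on (2M, ∞), and v(r) is asymptotic to a nonzero constant multiple of r^{ℓ+1} as r → ∞. In particular, this solution is unbounded on (2M,∞) for every ℓ ≥ 1. -/
open Set Filter

noncomputable def legendreP (l : ℕ) : ℝ → ℝ := fun w =>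
  (1 / (2 ^ l * (Nat.factorial l : ℝ))) * iteratedDeriv l (fun t : ℝ => (t ^ 2 - 1) ^ l) w

/-! With `w = r/M - 1`, the substitution `v(r) = (r/2M) f(w)` turns the zero-energy operator
into `(2Mr)⁻¹` times the Legendre operator `(1 - w²) f'' - 2w f' + ℓ(ℓ+1) f`, so `v` solves the
equation because `P_ℓ` solves Legendre's equation; the latter comes from differentiating
`(X² - 1) u' = 2ℓ X u`, `u = (X² - 1)^ℓ`, `ℓ + 1` times by Leibniz' rule. Since `P_ℓ` has
degree `ℓ` and positive leading coefficient, `v` is a polynomial of degree `ℓ + 1` in `r`,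
which gives the asymptotics and hence the unboundedness. -/

open Polynomial

namespace Polynomial

section CommRing

variable {R : Type*} [CommRing R]

theorem X_sq_sub_one_mul_derivative_pow (l : ℕ) :
    (X ^ 2 - 1 : R[X]) * derivative ((X ^ 2 - 1) ^ l) = 2 * (l : R[X]) * X * (X ^ 2 - 1) ^ l := by
  rcases l with _ | l
  · simp
  · rw [derivative_pow_succ]
    simp only [derivative_sub, derivative_X_sq, derivative_one, sub_zero, map_ofNat, C_add,
      map_natCast, map_one]
    push_cast
    ring

theorem legendre_ode_iterate_derivative (l : ℕ) :
    (1 - X ^ 2) * derivative^[l + 2] ((X ^ 2 - 1) ^ l : R[X])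
      - 2 * X * derivative^[l + 1] ((X ^ 2 - 1) ^ l)
      + (↑l * (↑l + 1) : R[X]) * derivative^[l] ((X ^ 2 - 1) ^ l) = 0 := by
  set u : R[X] := (X ^ 2 - 1) ^ l
  -- constants written as `C _` so that `iterate_derivative_C_mul` pulls them out below
  have hu : derivative^[2] u * X ^ 2 - derivative^[2] u + C 2 * (derivative u * X)
      - C (2 * l : R) * (derivative u * X) - C (2 * l : R) * u = 0 := by
    have h := congrArg derivative (X_sq_sub_one_mul_derivative_pow (R := R) l)
    simp only [derivative_mul, derivative_sub, derivative_X_sq, derivative_one, derivative_X,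
      derivative_natCast, derivative_ofNat, map_ofNat] at h
    simp only [Function.iterate_succ_apply', Function.iterate_zero_apply, map_mul, map_ofNat,
      map_natCast]
    linear_combination h
  have h := congrArg (derivative^[l]) hu
  simp only [iterate_map_add, iterate_derivative_sub, iterate_derivative_C_mul,
    iterate_derivative_derivative_mul_X_sq, iterate_derivative_derivative_mul_X,
    iterate_derivative_zero, ← Function.iterate_add_apply, nsmul_eq_mul] at h
  have hl : ((l * (l - 1) : ℕ) : R[X]) = l * l - l := by
    rcases l with _ | l
    · simp
    · push_cast
      ring
  simp only [map_mul, map_ofNat, map_natCast, Nat.cast_mul, Nat.cast_ofNat, hl] at h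
  linear_combination -h

theorem monic_X_sq_sub_one : (X ^ 2 - 1 : R[X]).Monic := by
  simpa using monic_X_pow_sub_C (1 : R) two_ne_zero

theorem natDegree_X_sq_sub_one_pow [Nontrivial R] (l : ℕ) :
    ((X ^ 2 - 1 : R[X]) ^ l).natDegree = 2 * l := by
  rw [monic_X_sq_sub_one.natDegree_pow, show (X ^ 2 - 1 : R[X]) = X ^ 2 - C 1 by simp,
    natDegree_X_pow_sub_C, mul_comm]

end CommRing

section Calculus

variable {𝕜 : Type*} [NontriviallyNormedField 𝕜]

theorem deriv_eval_fun (p : 𝕜[X]) :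
    deriv (fun x => p.eval x) = fun x => (derivative p).eval x := by
  ext x
  exact Polynomial.deriv p

theorem iteratedDeriv_eval (p : 𝕜[X]) (n : ℕ) :
    iteratedDeriv n (fun x => p.eval x) = fun x => (derivative^[n] p).eval x := by
  induction n with
  | zero => simp
  | succ n ih => rw [iteratedDeriv_succ, ih, deriv_eval_fun, Function.iterate_succ_apply']

end Calculus

theorem tendsto_eval_div_pow_natDegree {𝕜 : Type*} [NormedField 𝕜] [LinearOrder 𝕜]
    [IsStrictOrderedRing 𝕜] [OrderTopology 𝕜] (p : 𝕜[X]) :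
    Tendsto (fun x => p.eval x / x ^ p.natDegree) atTop (nhds p.leadingCoeff) := by
  rcases eq_or_ne p 0 with rfl | hp
  · simp
  simpa using div_tendsto_atTop_leadingCoeff_div_of_degree_eq p (X ^ p.natDegree)
    (by rw [degree_X_pow, degree_eq_natDegree hp])

end Polynomial

noncomputable def legendrePoly (l : ℕ) : ℝ[X] :=
  C (1 / (2 ^ l * (l.factorial : ℝ))) * derivative^[l] ((X ^ 2 - 1) ^ l)

theorem legendreP_eq_eval (l : ℕ) : legendreP l = fun w => (legendrePoly l).eval w := by
  have h : (fun t : ℝ => (t ^ 2 - 1) ^ l) = fun t => ((X ^ 2 - 1) ^ l : ℝ[X]).eval t := by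
    simp
  funext w
  simp [legendreP, legendrePoly, h, iteratedDeriv_eval]

theorem coeff_legendrePoly_self_pos (l : ℕ) : 0 < (legendrePoly l).coeff l := by
  have h := (monic_X_sq_sub_one.pow l : ((X ^ 2 - 1 : ℝ[X]) ^ l).Monic).coeff_natDegree
  rw [natDegree_X_sq_sub_one_pow] at h
  rw [legendrePoly, coeff_C_mul, coeff_iterate_derivative, ← two_mul, h, nsmul_one]
  have : 0 < (2 * l).descFactorial l := Nat.descFactorial_pos.mpr (by omega)
  positivity

theorem natDegree_legendrePoly (l : ℕ) : (legendrePoly l).natDegree = l := by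
  refine le_antisymm ?_ (le_natDegree_of_ne_zero (coeff_legendrePoly_self_pos l).ne')
  refine (natDegree_C_mul_le _ _).trans ((natDegree_iterate_derivative _ l).trans ?_)
  rw [natDegree_X_sq_sub_one_pow]
  omega

theorem leadingCoeff_legendrePoly_pos (l : ℕ) : 0 < (legendrePoly l).leadingCoeff := by
  rw [leadingCoeff, natDegree_legendrePoly]
  exact coeff_legendrePoly_self_pos l

theorem differentiable_legendreP (l : ℕ) : Differentiable ℝ (legendreP l) := by
  rw [legendreP_eq_eval]
  exact Polynomial.differentiable _

theorem differentiable_deriv_legendreP (l : ℕ) : Differentiable ℝ (deriv (legendreP l)) := by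
  rw [legendreP_eq_eval, deriv_eval_fun]
  exact Polynomial.differentiable _

theorem legendreP_ode (l : ℕ) (w : ℝ) :
    (1 - w ^ 2) * deriv (deriv (legendreP l)) w - 2 * w * deriv (legendreP l) w
      + (l * (l + 1) : ℝ) * legendreP l w = 0 := by
  have h := congrArg (eval w) (legendre_ode_iterate_derivative (R := ℝ) l)
  simp only [eval_add, eval_sub, eval_mul, eval_pow, eval_X, eval_one, eval_ofNat, eval_natCast,
    eval_zero] at h
  rw [legendreP_eq_eval, deriv_eval_fun, deriv_eval_fun]
  simp only [legendrePoly, derivative_C_mul, eval_mul, eval_C, ← Function.iterate_succ_apply']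
  linear_combination (1 / (2 ^ l * (l.factorial : ℝ))) * h

theorem zeroEnergy_of_legendre_ode {f : ℝ → ℝ} (hf : Differentiable ℝ f)
    (hf' : Differentiable ℝ (deriv f)) {M r ν : ℝ} (hM : M ≠ 0) (hr : r ≠ 0)
    (hode : (1 - (r / M - 1) ^ 2) * deriv (deriv f) (r / M - 1)
      - 2 * (r / M - 1) * deriv f (r / M - 1) + ν * f (r / M - 1) = 0) :
    -(1 - 2 * M / r) * deriv (deriv fun ρ => ρ / (2 * M) * f (ρ / M - 1)) r
      - (2 * M / r ^ 2) * deriv (fun ρ => ρ / (2 * M) * f (ρ / M - 1)) r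
      + (ν / r ^ 2 + 2 * M / r ^ 3) * (r / (2 * M) * f (r / M - 1)) = 0 := by
  have hw (ρ : ℝ) : HasDerivAt (fun x => x / M - 1) (1 / M) ρ := by
    simpa using ((hasDerivAt_id ρ).div_const M).sub_const 1
  have hlin (ρ : ℝ) : HasDerivAt (fun x => x / (2 * M)) (1 / (2 * M)) ρ := by
    simpa using (hasDerivAt_id ρ).div_const (2 * M)
  have hv : deriv (fun ρ => ρ / (2 * M) * f (ρ / M - 1))
      = fun ρ => 1 / (2 * M) * f (ρ / M - 1) + ρ / (2 * M) * (deriv f (ρ / M - 1) * (1 / M)) :=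
    funext fun ρ => ((hlin ρ).mul ((hf _).hasDerivAt.comp ρ (hw ρ))).deriv
  have hv' : HasDerivAt (deriv fun ρ => ρ / (2 * M) * f (ρ / M - 1))
      (1 / (2 * M) * (deriv f (r / M - 1) * (1 / M))
        + (1 / (2 * M) * (deriv f (r / M - 1) * (1 / M))
          + r / (2 * M) * (deriv (deriv f) (r / M - 1) * (1 / M) * (1 / M)))) r := by
    rw [hv]
    exact (((hf _).hasDerivAt.comp r (hw r)).const_mul _).add
      ((hlin r).mul (((hf' _).hasDerivAt.comp r (hw r)).mul_const _))
  rw [hv'.deriv, hv]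
  field_simp at hode ⊢
  linear_combination r * hode

theorem tendsto_scaled_legendreP_div_pow {M : ℝ} (hM : M ≠ 0) (l : ℕ) :
    Tendsto (fun r => r / (2 * M) * legendreP l (r / M - 1) / r ^ (l + 1)) atTop
      (nhds ((legendrePoly l).leadingCoeff / (2 * M ^ (l + 1)))) := by
  set q := (legendrePoly l).comp (C M⁻¹ * X + C (-1))
  have hq_natDegree : q.natDegree = l := by
    rw [natDegree_comp, natDegree_linear (inv_ne_zero hM), natDegree_legendrePoly, mul_one]
  have hq_leadingCoeff : q.leadingCoeff = (legendrePoly l).leadingCoeff * M⁻¹ ^ l := by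
    rw [leadingCoeff_comp (by rw [natDegree_linear (inv_ne_zero hM)]; exact one_ne_zero),
      leadingCoeff_linear (inv_ne_zero hM), natDegree_legendrePoly]
  have hq : q ≠ 0 := by
    rw [← leadingCoeff_ne_zero, hq_leadingCoeff]
    exact mul_ne_zero (leadingCoeff_legendrePoly_pos l).ne' (by positivity)
  set V := C (2 * M)⁻¹ * (X * q)
  have hV_natDegree : V.natDegree = l + 1 := by
    rw [natDegree_C_mul (by positivity), natDegree_X_mul hq, hq_natDegree]
  have h := V.tendsto_eval_div_pow_natDegree
  rw [hV_natDegree, leadingCoeff_mul, leadingCoeff_C, leadingCoeff_mul, leadingCoeff_X, one_mul,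
    hq_leadingCoeff] at h
  convert h using 2 with r
  · simp only [legendreP_eq_eval, mul_inv_rev, map_mul, map_neg, map_one, eval_mul, eval_C,
      eval_X, eval_comp, eval_add, eval_neg, eval_one, V, q]
    ring_nf
  · rw [inv_pow, pow_succ]
    field_simp

theorem tendsto_abs_atTop_of_tendsto_div_pow {f : ℝ → ℝ} {c : ℝ} {n : ℕ} (hc : c ≠ 0)
    (hn : n ≠ 0) (h : Tendsto (fun x => f x / x ^ n) atTop (nhds c)) :
    Tendsto (fun x => |f x|) atTop atTop := by
  refine (h.abs.pos_mul_atTop (abs_pos.mpr hc) (tendsto_pow_atTop hn)).congr' ?_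
  filter_upwards [eventually_gt_atTop 0] with x hx
  rw [abs_div, abs_of_pos (pow_pos hx n), div_mul_cancel₀ _ (pow_pos hx n).ne']

/-- In the scalar case `σ = 1`, `v(r) = (r/(2M)) P_ℓ(r/M − 1)` solves the zero-energy
Regge–Wheeler equation on `(2M,∞)`, is asymptotic to a nonzero multiple of `r^{ℓ+1}`
as `r → ∞`, and in particular is unbounded on `(2M,∞)` for every `ℓ ≥ 1`. -/
theorem legendre_zero_energy_solution (M : ℝ) (hM : 0 < M) (ℓ : ℕ) :
    (∀ r ∈ Set.Ioi (2 * M),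
      -(1 - 2 * M / r) *
          deriv (deriv fun ρ : ℝ => (ρ / (2 * M)) * legendreP ℓ (ρ / M - 1)) r -
        (2 * M / r ^ 2) * deriv (fun ρ : ℝ => (ρ / (2 * M)) * legendreP ℓ (ρ / M - 1)) r +
        ((ℓ * (ℓ + 1) : ℝ) / r ^ 2 + 2 * M / r ^ 3) *
          ((r / (2 * M)) * legendreP ℓ (r / M - 1)) = 0) ∧
    (∃ c : ℝ, c ≠ 0 ∧
      Filter.Tendsto (fun r : ℝ => ((r / (2 * M)) * legendreP ℓ (r / M - 1)) / r ^ (ℓ + 1))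
        Filter.atTop (nhds c)) ∧
    (1 ≤ ℓ → ¬ ∃ B : ℝ, ∀ r ∈ Set.Ioi (2 * M),
      |(r / (2 * M)) * legendreP ℓ (r / M - 1)| ≤ B) := by
  have hc : (legendrePoly ℓ).leadingCoeff / (2 * M ^ (ℓ + 1)) ≠ 0 :=
    div_ne_zero (leadingCoeff_legendrePoly_pos ℓ).ne' (by positivity)
  have hlim := tendsto_scaled_legendreP_div_pow hM.ne' ℓ
  refine ⟨fun r hr => ?_, ⟨_, hc, hlim⟩, fun _ ⟨B, hB⟩ => ?_⟩
  · exact zeroEnergy_of_legendre_ode (differentiable_legendreP ℓ)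
      (differentiable_deriv_legendreP ℓ) hM.ne' ((mul_pos two_pos hM).trans hr).ne'
      (legendreP_ode ℓ _)
  · obtain ⟨r, hBr, hr⟩ := ((tendsto_abs_atTop_of_tendsto_div_pow hc ℓ.succ_ne_zero
      hlim).eventually_gt_atTop B |>.and (eventually_gt_atTop (2 * M))).exists
    exact (hB r hr).not_gt hBr
end

section
/- The functions f_{0,0}(x) = 1, f_{0,−3}(x) = 1 − 3M/r(x), and f_{1,−3}(x) = 1/r(x) are bounded nonzero solutions of H_{ℓ,σ} f = −f'' + V_{ℓ,σ} f = 0 for (ℓ,σ) = (0,0), (0,−3), (1,−3) respectively, where V_{ℓ,σ}(x) = (1 − 2M/r(x))(ℓ(ℓ+1)/r(x)² + 2Mσ/r(x)³) and r(x) is the inverse tortoise coordinate. Hence the operator H_{ℓ,σ} has a zero energy resonance in each of these three cases. -/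
/-!
Along the flow `r' = F(r)` with `F(r) = 1 - 2M/r`, differentiation in the tortoise coordinate is
`F(r) d/dr`, so `f = g ∘ r` has `f'' = (g'' F + g' F') F` evaluated at `r`; for `g = 1 - 3M/r`
and `g = 1/r` this is exactly `V_{ℓ,σ} g` with `(ℓ,σ) = (0,-3), (1,-3)`.
Non-vanishing of `1 - 3M/r` holds because `r` is injective: the tortoise map
`r ↦ r + 2M log(r/2M - 1)` is a left inverse of it.
-/

noncomputable def reggeWheelerPotential (M ℓ σ s : ℝ) : ℝ :=
  (1 - 2 * M / s) * (ℓ * (ℓ + 1) / s ^ 2 + 2 * M * σ / s ^ 3)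

theorem deriv_deriv_comp_of_hasDerivAt {r F F' g g' g'' : ℝ → ℝ}
    (hr : ∀ x, HasDerivAt r (F (r x)) x) (hF : ∀ x, HasDerivAt F (F' (r x)) (r x))
    (hg : ∀ x, HasDerivAt g (g' (r x)) (r x)) (hg' : ∀ x, HasDerivAt g' (g'' (r x)) (r x))
    (x : ℝ) :
    deriv (deriv fun t => g (r t)) x = (g'' (r x) * F (r x) + g' (r x) * F' (r x)) * F (r x) := by
  have hd : deriv (fun t => g (r t)) = fun t => g' (r t) * F (r t) :=
    funext fun t => ((hg t).comp t (hr t)).deriv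
  have hd' : HasDerivAt (fun t => g' (r t) * F (r t))
      (g'' (r x) * F (r x) * F (r x) + g' (r x) * (F' (r x) * F (r x))) x :=
    ((hg' x).comp x (hr x)).mul ((hF x).comp x (hr x))
  rw [hd, hd'.deriv]
  ring

theorem hasDerivAt_const_div (c : ℝ) {s : ℝ} (hs : s ≠ 0) :
    HasDerivAt (fun s => c / s) (-(c / s ^ 2)) s := by
  have h := (hasDerivAt_inv hs).const_mul c
  simp only [← div_eq_mul_inv, mul_neg] at h
  exact h

theorem hasDerivAt_const_div_sq (c : ℝ) {s : ℝ} (hs : s ≠ 0) :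
    HasDerivAt (fun s => c / s ^ 2) (-(2 * c / s ^ 3)) s :=
  ((hasDerivAt_const_div c (pow_ne_zero 2 hs)).comp (h := fun s => s ^ 2) s
    (hasDerivAt_pow 2 s)).congr_deriv (by field_simp; ring)

theorem hasDerivAt_one_sub_const_div (c : ℝ) {s : ℝ} (hs : s ≠ 0) :
    HasDerivAt (fun s => 1 - c / s) (c / s ^ 2) s :=
  ((hasDerivAt_const_div c hs).const_sub 1).congr_deriv (neg_neg _)

section Schwarzschild

variable {M : ℝ} {r : ℝ → ℝ} (hr0 : ∀ x, r x ≠ 0) (hr' : ∀ x, HasDerivAt r (1 - 2 * M / r x) x)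
include hr0 hr'

theorem deriv_deriv_one_sub_three_mul_div (x : ℝ) :
    deriv (deriv fun t => 1 - 3 * M / r t) x =
      reggeWheelerPotential M 0 (-3) (r x) * (1 - 3 * M / r x) := by
  rw [deriv_deriv_comp_of_hasDerivAt (F' := fun s => 2 * M / s ^ 2)
    (g' := fun s => 3 * M / s ^ 2) (g'' := fun s => -(2 * (3 * M) / s ^ 3)) hr'
    (fun x => hasDerivAt_one_sub_const_div _ (hr0 x))
    (fun x => hasDerivAt_one_sub_const_div _ (hr0 x))
    (fun x => hasDerivAt_const_div_sq _ (hr0 x))]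
  have := hr0 x
  simp only [reggeWheelerPotential]
  field_simp
  ring

theorem deriv_deriv_one_div (x : ℝ) :
    deriv (deriv fun t => 1 / r t) x = reggeWheelerPotential M 1 (-3) (r x) * (1 / r x) := by
  rw [deriv_deriv_comp_of_hasDerivAt (F' := fun s => 2 * M / s ^ 2)
    (g' := fun s => -(1 / s ^ 2)) (g'' := fun s => 2 / s ^ 3) hr'
    (fun x => hasDerivAt_one_sub_const_div _ (hr0 x))
    (fun x => hasDerivAt_const_div _ (hr0 x))
    (fun x => (hasDerivAt_const_div_sq 1 (hr0 x)).neg.congr_deriv (by ring))]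
  have := hr0 x
  simp only [reggeWheelerPotential]
  field_simp
  ring

end Schwarzschild

/-- The functions `f_{0,0} = 1`, `f_{0,−3} = 1 − 3M/r(x)`, `f_{1,−3} = 1/r(x)` are
bounded nonzero solutions of `−f'' + V_{ℓ,σ} f = 0` for `(ℓ,σ) = (0,0), (0,−3), (1,−3)`
respectively: the zero energy resonances of the Regge–Wheeler operator. -/
theorem zero_energy_resonances
    (M : ℝ) (hM : 0 < M) (r : ℝ → ℝ)
    (hr2M : ∀ x : ℝ, 2 * M < r x)
    (hrx : ∀ x : ℝ, x = r x + 2 * M * Real.log (r x / (2 * M) - 1))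
    (hr' : ∀ x : ℝ, HasDerivAt r (1 - 2 * M / r x) x) :
    -- the Regge--Wheeler potential with parameters (ℓ, σ)
    let V : ℝ → ℝ → ℝ → ℝ := fun ℓ σ x =>
      (1 - 2 * M / r x) * (ℓ * (ℓ + 1) / (r x) ^ 2 + 2 * M * σ / (r x) ^ 3)
    -- (ℓ,σ) = (0,0):  f(x) = 1
    ((∃ B : ℝ, ∀ x : ℝ, |(1 : ℝ)| ≤ B) ∧ (∃ x : ℝ, (1 : ℝ) ≠ 0) ∧
      (∀ x : ℝ, deriv (deriv fun _ : ℝ => (1 : ℝ)) x = V 0 0 x * 1)) ∧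
    -- (ℓ,σ) = (0,−3):  f(x) = 1 − 3M/r(x)
    ((∃ B : ℝ, ∀ x : ℝ, |1 - 3 * M / r x| ≤ B) ∧ (∃ x : ℝ, 1 - 3 * M / r x ≠ 0) ∧
      (∀ x : ℝ, deriv (deriv fun t : ℝ => 1 - 3 * M / r t) x =
        V 0 (-3) x * (1 - 3 * M / r x))) ∧
    -- (ℓ,σ) = (1,−3):  f(x) = 1/r(x)
    ((∃ B : ℝ, ∀ x : ℝ, |1 / r x| ≤ B) ∧ (∃ x : ℝ, 1 / r x ≠ 0) ∧
      (∀ x : ℝ, deriv (deriv fun t : ℝ => 1 / r t) x = V 1 (-3) x * (1 / r x))) := by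
  intro V
  have hr_pos (x : ℝ) : 0 < r x := by linarith [hr2M x]
  have hr0 (x : ℝ) : r x ≠ 0 := (hr_pos x).ne'
  have hr_inj : r.Injective := Function.LeftInverse.injective
    (g := fun s => s + 2 * M * Real.log (s / (2 * M) - 1)) fun x => (hrx x).symm
  refine ⟨⟨⟨1, fun _ => abs_one.le⟩, ⟨0, one_ne_zero⟩, fun x => by simp [V]⟩,
    ⟨⟨1, fun x => ?_⟩, ?_, deriv_deriv_one_sub_three_mul_div hr0 hr'⟩,
    ⟨⟨1 / (2 * M), fun x => ?_⟩, ⟨0, by simp [hr0]⟩, deriv_deriv_one_div hr0 hr'⟩⟩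
  · have h32 : 3 * M / r x ≤ 3 / 2 := by
      rw [div_le_iff₀ (hr_pos x)]; linarith [hr2M x]
    rw [abs_le]; constructor <;> linarith [div_pos (by linarith : 0 < 3 * M) (hr_pos x)]
  · obtain ⟨x, hx⟩ := hr_inj.exists_ne (3 * M)
    refine ⟨x, fun h => hx ?_⟩
    field_simp [hr0 x] at h
    linarith
  · rw [abs_of_pos (one_div_pos.mpr (hr_pos x))]
    exact one_div_le_one_div_of_le (by positivity) (hr2M x).le
end

section
/- Let δ > 0 and let ω : ℝ × ℝ × ℝ → ℂ be measurable, smooth in λ, with ω(x,x',λ) = 0 for |λ| ≤ δ/2, and satisfying |∂_λ^m ω(x,x',λ)| ≤ C_m ⟨x⟩^m ⟨x'⟩^m for all m ∈ ℕ₀, x, x' ∈ ℝ, λ ∈ ℝ. Let α ∈ ℕ₀. Then for all t ≥ 0 and all x, x' ∈ ℝ, |∫_ℝ e^{iλ(±t + x − x')} ω(x,x',λ) ⟨x⟩^{−α} ⟨x'⟩^{−α} dλ| ≤ C ⟨t⟩^{−α}, provided ω(x,x',·) ∈ L¹(ℝ) with uniformly bounded L¹ norm after α λ-derivatives weighted appropriately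 (i.e., ∫_ℝ |∂_λ^α ω(x,x',λ)| dλ ≤ C ⟨x⟩^α ⟨x'⟩^α uniformly). -/
open Set MeasureTheory Complex FourierTransform Real RealInnerProductSpace

lemma osc_ibp (f : ℝ → ℂ) (hf : ContDiff ℝ (⊤ : ℕ∞) f) (α : ℕ)
    (hInt : ∀ j ≤ α, MeasureTheory.Integrable (iteratedDeriv j f)) (θ : ℝ) (hθ : θ ≠ 0) :
    ‖∫ lam : ℝ, Complex.exp (Complex.I * lam * θ) * f lam‖ ≤
      |θ|⁻¹ ^ α * ∫ lam : ℝ, ‖iteratedDeriv α f lam‖ := by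
  set ξ : ℝ := -θ / (2 * Real.pi) with hξdef
  have hpi : (2 * Real.pi) ≠ 0 := by positivity
  have hξ : 2 * Real.pi * ξ = -θ := by rw [hξdef]; field_simp
  have heq : (∫ lam : ℝ, Complex.exp (Complex.I * lam * θ) * f lam) = 𝓕 f ξ := by
    rw [Real.fourier_eq']
    congr 1; ext v
    rw [smul_eq_mul]
    congr 1
    have h1 : (-2 * Real.pi * (inner ℝ v ξ : ℝ) : ℝ) = v * θ := by
      simp only [RCLike.inner_apply, conj_trivial]
      linear_combination (-v) * hξ
    rw [h1]
    push_cast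
    ring_nf
  have hFT := Real.fourier_iteratedDeriv (N := (α : ℕ∞)) (n := α)
    (hf.of_le (by exact_mod_cast le_top))
    (fun n hn => hInt n (by exact_mod_cast hn)) le_rfl
  have hptw := congrFun hFT ξ
  have hnorm : ‖(2 * ↑Real.pi * Complex.I * (ξ:ℂ)) ^ α‖ = |θ| ^ α := by
    rw [norm_pow]
    congr 1
    have : (2 * ↑Real.pi * Complex.I * (ξ:ℂ)) = ((2 * Real.pi * ξ : ℝ) : ℂ) * Complex.I := by
      push_cast; ring
    rw [this, norm_mul, Complex.norm_I, mul_one, Complex.norm_real, Real.norm_eq_abs, hξ, abs_neg]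
  have hle : ‖𝓕 (iteratedDeriv α f) ξ‖ ≤ ∫ lam : ℝ, ‖iteratedDeriv α f lam‖ :=
    VectorFourier.norm_fourierIntegral_le_integral_norm _ _ _ _ _
  rw [hptw] at hle
  rw [smul_eq_mul, norm_mul, hnorm] at hle
  rw [heq]
  have hθpos : 0 < |θ| ^ α := by positivity
  calc ‖𝓕 f ξ‖ = (|θ|⁻¹ ^ α) * (|θ| ^ α * ‖𝓕 f ξ‖) := by
        rw [← mul_assoc, ← mul_pow, inv_mul_cancel₀ (abs_ne_zero.mpr hθ), one_pow, one_mul]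
    _ ≤ |θ|⁻¹ ^ α * ∫ lam : ℝ, ‖iteratedDeriv α f lam‖ := by
        apply mul_le_mul_of_nonneg_left hle (by positivity)


set_option maxHeartbeats 1000000 in
/-- Integration-by-parts oscillatory estimate in the large-`|xλ|` regime:
for `ω(x,x',·)` vanishing for `|λ| ≤ δ/2`, with `|∂_λ^m ω| ≤ C_m ⟨x⟩^m ⟨x'⟩^m` and
uniformly controlled `L¹` norms of `ω` and its first `α` `λ`-derivatives,
`|∫ e^{iλ(±t+x−x')} ω dλ| ⟨x⟩^{−α} ⟨x'⟩^{−α} ≤ C ⟨t⟩^{−α}` for all `t ≥ 0`. -/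
theorem oscillatory_estimate_large_xlambda
    (δ : ℝ) (hδ : 0 < δ) (ω : ℝ → ℝ → ℝ → ℂ)
    (hsm : ∀ x x' : ℝ, ContDiff ℝ (⊤ : ℕ∞) (ω x x'))
    (hsupp : ∀ x x' lam : ℝ, |lam| ≤ δ / 2 → ω x x' lam = 0)
    (Cm : ℕ → ℝ)
    (hbd : ∀ (m : ℕ) (x x' lam : ℝ),
      ‖iteratedDeriv m (ω x x') lam‖ ≤
        Cm m * Real.sqrt (1 + x ^ 2) ^ m * Real.sqrt (1 + x' ^ 2) ^ m)
    (α : ℕ) (CL : ℝ)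
    (hInt : ∀ j ≤ α, ∀ x x' : ℝ, MeasureTheory.Integrable (iteratedDeriv j (ω x x')))
    (hL1w : ∀ j ≤ α, ∀ x x' : ℝ,
      (∫ lam : ℝ, ‖iteratedDeriv j (ω x x') lam‖) ≤
        CL * Real.sqrt (1 + x ^ 2) ^ α * Real.sqrt (1 + x' ^ 2) ^ α)
    (hL10 : ∀ x x' : ℝ, (∫ lam : ℝ, ‖ω x x' lam‖) ≤ CL) :
    ∃ C : ℝ, ∀ t ≥ (0 : ℝ), ∀ x x' : ℝ, ∀ s : ℝ, s = 1 ∨ s = -1 →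
      (Real.sqrt (1 + x ^ 2))⁻¹ ^ α * (Real.sqrt (1 + x' ^ 2))⁻¹ ^ α *
          ‖∫ lam : ℝ, Complex.exp (Complex.I * lam * (s * t + x - x')) * ω x x' lam‖ ≤
        C * ((Real.sqrt (1 + t ^ 2))⁻¹) ^ α := by
  have hCL : 0 ≤ CL := le_trans (integral_nonneg (fun _ => norm_nonneg _)) (hL10 0 0)
  refine ⟨CL * 8 ^ α, ?_⟩
  intro t ht x x' s hs
  set a : ℝ := Real.sqrt (1 + x ^ 2) with ha
  set b : ℝ := Real.sqrt (1 + x' ^ 2) with hb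
  set c : ℝ := Real.sqrt (1 + t ^ 2) with hc
  set θ : ℝ := s * t + x - x' with hθdef
  have hgoal : (∫ lam : ℝ, Complex.exp (Complex.I * lam * ((s:ℂ) * t + x - x')) * ω x x' lam)
      = ∫ lam : ℝ, Complex.exp (Complex.I * lam * (θ:ℂ)) * ω x x' lam := by
    congr 1; ext lam; congr 2; push_cast [hθdef]; ring
  rw [hgoal]
  have hone_le : ∀ y : ℝ, (1:ℝ) ≤ Real.sqrt (1 + y ^ 2) := by
    intro y
    nlinarith [Real.sq_sqrt (show (0:ℝ) ≤ 1 + y ^ 2 by positivity),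
      Real.sqrt_nonneg (1 + y ^ 2)]
  have hax : (1:ℝ) ≤ a := hone_le x
  have hbx : (1:ℝ) ≤ b := hone_le x'
  have hcx : (1:ℝ) ≤ c := hone_le t
  have ha0 : 0 < a := lt_of_lt_of_le one_pos hax
  have hb0 : 0 < b := lt_of_lt_of_le one_pos hbx
  have hc0 : 0 < c := lt_of_lt_of_le one_pos hcx
  have habs_x : |x| ≤ a := by
    rw [ha, ← Real.sqrt_sq_eq_abs]
    exact Real.sqrt_le_sqrt (by nlinarith)
  have habs_x' : |x'| ≤ b := by
    rw [hb, ← Real.sqrt_sq_eq_abs]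
    exact Real.sqrt_le_sqrt (by nlinarith)
  have hnormexp : ∀ lam : ℝ, ‖Complex.exp (Complex.I * lam * θ) * ω x x' lam‖
      = ‖ω x x' lam‖ := by
    intro lam
    have h : (Complex.I * lam * θ : ℂ) = ((lam * θ : ℝ) : ℂ) * Complex.I := by push_cast; ring
    rw [norm_mul, h, Complex.norm_exp_ofReal_mul_I, one_mul]
  have htriv : ‖∫ lam : ℝ, Complex.exp (Complex.I * lam * θ) * ω x x' lam‖ ≤ CL := by
    refine le_trans (norm_integral_le_integral_norm _) ?_
    calc (∫ lam : ℝ, ‖Complex.exp (Complex.I * lam * θ) * ω x x' lam‖)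
        = ∫ lam : ℝ, ‖ω x x' lam‖ := by
          apply integral_congr_ae
          filter_upwards with lam using hnormexp lam
      _ ≤ CL := hL10 x x'
  have hJ0 : (0:ℝ) ≤ ‖∫ lam : ℝ, Complex.exp (Complex.I * lam * θ) * ω x x' lam‖ :=
    norm_nonneg _
  -- generic inequality: if c ≤ 8 * d with d > 0 then d⁻¹ ≤ 8 * c⁻¹
  have hgen : ∀ d : ℝ, 0 < d → c ≤ 8 * d → d⁻¹ ≤ 8 * c⁻¹ := by
    intro d hd hcd
    calc d⁻¹ = c⁻¹ * (c * d⁻¹) := by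
          rw [← mul_assoc, inv_mul_cancel₀ (ne_of_gt hc0), one_mul]
      _ ≤ c⁻¹ * (8 * d * d⁻¹) := by
          apply mul_le_mul_of_nonneg_left
            (mul_le_mul_of_nonneg_right hcd (inv_nonneg.mpr hd.le)) (inv_nonneg.mpr hc0.le)
      _ = 8 * c⁻¹ := by rw [mul_assoc, mul_inv_cancel₀ (ne_of_gt hd)]; ring
  by_cases h1 : t ≤ 1
  · have hcle : c ≤ 8 * 1 := by
      rw [hc, show (8:ℝ) * 1 = Real.sqrt 64 by
        rw [show (64:ℝ) = 8 ^ 2 by norm_num, Real.sqrt_sq] <;> norm_num]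
      exact Real.sqrt_le_sqrt (by nlinarith)
    have h8 : (1:ℝ) ≤ 8 * c⁻¹ := by
      have := hgen 1 one_pos hcle
      simpa using this
    calc a⁻¹ ^ α * b⁻¹ ^ α * ‖∫ lam : ℝ, Complex.exp (Complex.I * lam * θ) * ω x x' lam‖
        ≤ 1 * 1 * CL := by
          apply mul_le_mul (mul_le_mul ?_ ?_ (by positivity) (by norm_num)) htriv hJ0 (by norm_num)
          · exact pow_le_one₀ (by positivity) (inv_le_one_of_one_le₀ hax)
          · exact pow_le_one₀ (by positivity) (inv_le_one_of_one_le₀ hbx)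
      _ = CL := by ring
      _ ≤ CL * (8 * c⁻¹) ^ α := by
          nlinarith [mul_le_mul_of_nonneg_left (one_le_pow₀ h8 (n := α)) hCL]
      _ = CL * 8 ^ α * (c⁻¹) ^ α := by rw [mul_pow]; ring
  · push_neg at h1
    have hct : c ≤ 2 * t := by
      rw [hc, show 2 * t = Real.sqrt ((2 * t) ^ 2) by rw [Real.sqrt_sq] ; nlinarith]
      exact Real.sqrt_le_sqrt (by nlinarith)
    by_cases h2 : t / 2 ≤ |θ|
    · have hθne : θ ≠ 0 := by
        intro h
        rw [h] at h2
        simp at h2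
        linarith
      have hθpos : 0 < |θ| := lt_of_lt_of_le (by linarith) h2
      have hkey := osc_ibp (ω x x') (hsm x x') α (fun j hj => hInt j hj x x') θ hθne
      have hIw : (∫ lam : ℝ, ‖iteratedDeriv α (ω x x') lam‖) ≤ CL * a ^ α * b ^ α :=
        hL1w α le_rfl x x'
      have hθinv : |θ|⁻¹ ≤ 8 * c⁻¹ := hgen |θ| hθpos (by nlinarith)
      calc a⁻¹ ^ α * b⁻¹ ^ α * ‖∫ lam : ℝ, Complex.exp (Complex.I * lam * θ) * ω x x' lam‖
          ≤ a⁻¹ ^ α * b⁻¹ ^ α * (|θ|⁻¹ ^ α * (CL * a ^ α * b ^ α)) := by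
            apply mul_le_mul_of_nonneg_left _ (by positivity)
            exact le_trans hkey (mul_le_mul_of_nonneg_left hIw (by positivity))
        _ = CL * |θ|⁻¹ ^ α * ((a⁻¹ * a) ^ α * (b⁻¹ * b) ^ α) := by
            rw [mul_pow, mul_pow]; ring
        _ = CL * |θ|⁻¹ ^ α := by
            rw [inv_mul_cancel₀ (ne_of_gt ha0), inv_mul_cancel₀ (ne_of_gt hb0)]; simp
        _ ≤ CL * (8 * c⁻¹) ^ α := by
            apply mul_le_mul_of_nonneg_left (pow_le_pow_left₀ (by positivity) hθinv α) hCL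
        _ = CL * 8 ^ α * (c⁻¹) ^ α := by rw [mul_pow]; ring
    · push_neg at h2
      have hst : |s * t| = t := by
        rcases hs with h | h <;> subst h
        · rw [one_mul, _root_.abs_of_nonneg ht]
        · rw [neg_one_mul, abs_neg, _root_.abs_of_nonneg ht]
      have hxx' : t / 2 ≤ |x - x'| := by
        have hrw : s * t = θ - (x - x') := by rw [hθdef]; ring
        have h3 : t ≤ |θ| + |x - x'| := by
          calc t = |s * t| := hst.symm
            _ = |θ - (x - x')| := by rw [hrw]
            _ ≤ |θ| + |x - x'| := abs_sub _ _
        linarith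
      have hmax : t / 4 ≤ a * b := by
        have h4 : t / 2 ≤ |x| + |x'| := le_trans hxx' (abs_sub _ _)
        rcases le_total |x| |x'| with h | h
        · calc t / 4 ≤ |x'| := by linarith
            _ ≤ b := habs_x'
            _ = 1 * b := (one_mul b).symm
            _ ≤ a * b := mul_le_mul_of_nonneg_right hax hb0.le
        · calc t / 4 ≤ |x| := by linarith
            _ ≤ a := habs_x
            _ = a * 1 := (mul_one a).symm
            _ ≤ a * b := mul_le_mul_of_nonneg_left hbx ha0.le
      have hinv : a⁻¹ * b⁻¹ ≤ 8 * c⁻¹ := by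
        rw [← mul_inv]
        exact hgen (a * b) (mul_pos ha0 hb0) (by nlinarith)
      calc a⁻¹ ^ α * b⁻¹ ^ α * ‖∫ lam : ℝ, Complex.exp (Complex.I * lam * θ) * ω x x' lam‖
          = (a⁻¹ * b⁻¹) ^ α * ‖∫ lam : ℝ, Complex.exp (Complex.I * lam * θ) * ω x x' lam‖ := by
            rw [mul_pow]
        _ ≤ (8 * c⁻¹) ^ α * CL := by
            apply mul_le_mul (pow_le_pow_left₀ (by positivity) hinv α) htriv hJ0 (by positivity)
        _ = CL * 8 ^ α * (c⁻¹) ^ α := by rw [mul_pow]; ring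
end

section
/- Under the hypotheses of the large-energy Jost estimates (|∂_λ^m(m_±(0,λ) − 1)| ≤ C_m λ^{−1−m} and similarly for m_±'(0,λ), for λ ≥ λ₀ > 0), the Wronskian W(λ) = W(f₋(·,λ), f₊(·,λ)) satisfies 1/W(λ) = (1/(2iλ))·(1 + O_ℂ(λ^{−1})) for λ ≥ λ₀, where the O_ℂ-term is of symbol type: its m-th λ-derivative is O(λ^{−1−m}) for every m ∈ ℕ₀. -/
open Set Complex

namespace WronskianLargeEnergyAux

/-- Truncated symbol estimate of order `-a` on `[lam₀, ∞)`, up to `n` derivatives. -/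
def SyN (lam₀ : ℝ) (a : ℕ) (f : ℝ → ℂ) (n : ℕ) : Prop :=
  ∀ m, m ≤ n → ∃ C : ℝ, 0 ≤ C ∧ ∀ lam, lam₀ ≤ lam →
    ‖iteratedDeriv m f lam‖ ≤ C * lam⁻¹ ^ (a + m)

/-- Symbol estimate of order `-a` on `[lam₀, ∞)` (all derivatives). -/
def Sy (lam₀ : ℝ) (a : ℕ) (f : ℝ → ℂ) : Prop :=
  ∀ n, SyN lam₀ a f n

lemma sy_of_syN {lam₀ : ℝ} {a : ℕ} {f : ℝ → ℂ} (h : ∀ n, SyN lam₀ a f n) :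
    Sy lam₀ a f := h

lemma Sy.syN {lam₀ : ℝ} {a : ℕ} {f : ℝ → ℂ} (h : Sy lam₀ a f) (n : ℕ) :
    SyN lam₀ a f n := h n

lemma sy_def {lam₀ : ℝ} {a : ℕ} {f : ℝ → ℂ} (h : Sy lam₀ a f) (m : ℕ) :
    ∃ C : ℝ, 0 ≤ C ∧ ∀ lam, lam₀ ≤ lam → ‖iteratedDeriv m f lam‖ ≤ C * lam⁻¹ ^ (a + m) :=
  h m m le_rfl

lemma syN_mono {lam₀ : ℝ} (hlam₀ : 0 < lam₀) {a b : ℕ} (hba : b ≤ a) {f : ℝ → ℂ} {n : ℕ}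
    (hf : SyN lam₀ a f n) : SyN lam₀ b f n := by
  intro m hm
  obtain ⟨C, hC0, hC⟩ := hf m hm
  have h0 : (0:ℝ) < lam₀⁻¹ := by positivity
  refine ⟨C * lam₀⁻¹ ^ (a - b), by positivity, fun lam hlam => ?_⟩
  have hl : (0:ℝ) < lam := lt_of_lt_of_le hlam₀ hlam
  have h1 : lam⁻¹ ≤ lam₀⁻¹ := by
    apply inv_anti₀ hlam₀ hlam
  calc ‖iteratedDeriv m f lam‖ ≤ C * lam⁻¹ ^ (a + m) := hC lam hlam
    _ = C * (lam⁻¹ ^ (a - b) * lam⁻¹ ^ (b + m)) := by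
        rw [← pow_add]; congr 2; omega
    _ ≤ C * (lam₀⁻¹ ^ (a - b) * lam⁻¹ ^ (b + m)) := by
        have hli : (0:ℝ) ≤ lam⁻¹ := by positivity
        gcongr
    _ = C * lam₀⁻¹ ^ (a - b) * lam⁻¹ ^ (b + m) := by ring

lemma sy_mono {lam₀ : ℝ} (hlam₀ : 0 < lam₀) {a b : ℕ} (hba : b ≤ a) {f : ℝ → ℂ}
    (hf : Sy lam₀ a f) : Sy lam₀ b f := fun n => syN_mono hlam₀ hba (hf n)

lemma iteratedDerivWithin_of_isOpen' {U : Set ℝ} (hU : IsOpen U) {x : ℝ} (hx : x ∈ U)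
    (n : ℕ) (f : ℝ → ℂ) : iteratedDerivWithin n f U x = iteratedDeriv n f x := by
  rw [iteratedDerivWithin_eq_iteratedFDerivWithin, iteratedDeriv_eq_iteratedFDeriv,
    iteratedFDerivWithin_of_isOpen n hU hx]

lemma norm_iFDW_eq {U : Set ℝ} (hU : IsOpen U) {x : ℝ} (hx : x ∈ U) (n : ℕ) (f : ℝ → ℂ) :
    ‖iteratedFDerivWithin ℝ n f U x‖ = ‖iteratedDeriv n f x‖ := by
  rw [iteratedFDerivWithin_of_isOpen n hU hx, norm_iteratedFDeriv_eq_norm_iteratedDeriv]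

lemma cdo_nat {f : ℝ → ℂ} {U : Set ℝ} (h : ContDiffOn ℝ (⊤:ℕ∞) f U) (m : ℕ) :
    ContDiffOn ℝ m f U := h.of_le (by exact_mod_cast le_top)

lemma syN_neg {lam₀ : ℝ} {a : ℕ} {f : ℝ → ℂ} {n : ℕ} (hf : SyN lam₀ a f n) :
    SyN lam₀ a (fun l => -(f l)) n := by
  intro m hm
  obtain ⟨C, hC0, hC⟩ := hf m hm
  refine ⟨C, hC0, fun lam hlam => ?_⟩
  rw [iteratedDeriv_fun_neg, norm_neg]
  exact hC lam hlam

lemma syN_add {lam₀ : ℝ} {U : Set ℝ} (hU : IsOpen U) (hUl : Set.Ici lam₀ ⊆ U)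
    {a : ℕ} {f g : ℝ → ℂ} {n : ℕ}
    (hfs : ContDiffOn ℝ (⊤:ℕ∞) f U) (hgs : ContDiffOn ℝ (⊤:ℕ∞) g U)
    (hf : SyN lam₀ a f n) (hg : SyN lam₀ a g n) :
    SyN lam₀ a (fun l => f l + g l) n := by
  intro m hm
  obtain ⟨C1, h10, h1⟩ := hf m hm
  obtain ⟨C2, h20, h2⟩ := hg m hm
  refine ⟨C1 + C2, by positivity, fun lam hlam => ?_⟩
  have hmem : lam ∈ U := hUl hlam
  have e1 : iteratedDeriv m (fun l => f l + g l) lam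
      = iteratedDeriv m f lam + iteratedDeriv m g lam := by
    have h3 := iteratedDerivWithin_add hmem hU.uniqueDiffOn (cdo_nat hfs m lam hmem) (cdo_nat hgs m lam hmem)
    rw [iteratedDerivWithin_of_isOpen' hU hmem, iteratedDerivWithin_of_isOpen' hU hmem,
      iteratedDerivWithin_of_isOpen' hU hmem] at h3
    exact h3
  calc ‖iteratedDeriv m (fun l => f l + g l) lam‖
      ≤ ‖iteratedDeriv m f lam‖ + ‖iteratedDeriv m g lam‖ := by
        rw [e1]; exact norm_add_le _ _
    _ ≤ C1 * lam⁻¹ ^ (a + m) + C2 * lam⁻¹ ^ (a + m) := add_le_add (h1 lam hlam) (h2 lam hlam)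
    _ = (C1 + C2) * lam⁻¹ ^ (a + m) := by ring

lemma syN_sub {lam₀ : ℝ} {U : Set ℝ} (hU : IsOpen U) (hUl : Set.Ici lam₀ ⊆ U)
    {a : ℕ} {f g : ℝ → ℂ} {n : ℕ}
    (hfs : ContDiffOn ℝ (⊤:ℕ∞) f U) (hgs : ContDiffOn ℝ (⊤:ℕ∞) g U)
    (hf : SyN lam₀ a f n) (hg : SyN lam₀ a g n) :
    SyN lam₀ a (fun l => f l - g l) n := by
  have := syN_add hU hUl hfs hgs.neg hf (syN_neg hg)
  simpa [sub_eq_add_neg] using this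

lemma syN_mul {lam₀ : ℝ} (hlam₀ : 0 < lam₀) {U : Set ℝ} (hU : IsOpen U)
    (hUl : Set.Ici lam₀ ⊆ U) {a b : ℕ} {f g : ℝ → ℂ} {n : ℕ}
    (hfs : ContDiffOn ℝ (⊤:ℕ∞) f U) (hgs : ContDiffOn ℝ (⊤:ℕ∞) g U)
    (hf : SyN lam₀ a f n) (hg : SyN lam₀ b g n) :
    SyN lam₀ (a + b) (fun l => f l * g l) n := by
  intro m hm
  have hCf : ∀ i, i ≤ m → ∃ C : ℝ, 0 ≤ C ∧ ∀ lam, lam₀ ≤ lam →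
      ‖iteratedDeriv i f lam‖ ≤ C * lam⁻¹ ^ (a + i) := fun i hi => hf i (hi.trans hm)
  have hCg : ∀ i, i ≤ m → ∃ C : ℝ, 0 ≤ C ∧ ∀ lam, lam₀ ≤ lam →
      ‖iteratedDeriv i g lam‖ ≤ C * lam⁻¹ ^ (b + i) := fun i hi => hg i (hi.trans hm)
  choose! Cf hCf0 hCfb using hCf
  choose! Cg hCg0 hCgb using hCg
  refine ⟨∑ i ∈ Finset.range (m + 1), (m.choose i : ℝ) * Cf i * Cg (m - i), ?_, fun lam hlam => ?_⟩
  · apply Finset.sum_nonneg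
    intro i hi
    have hi' : i ≤ m := Nat.lt_succ_iff.mp (Finset.mem_range.mp hi)
    have := hCf0 i hi'
    have := hCg0 (m - i) (Nat.sub_le m i)
    positivity
  · have hmem : lam ∈ U := hUl hlam
    have hl : (0:ℝ) < lam := lt_of_lt_of_le hlam₀ hlam
    have key : ‖iteratedDeriv m (fun l => f l * g l) lam‖ ≤
        ∑ i ∈ Finset.range (m + 1), (m.choose i : ℝ) *
          ‖iteratedDeriv i f lam‖ * ‖iteratedDeriv (m - i) g lam‖ := by
      rw [← norm_iFDW_eq hU hmem]
      refine (norm_iteratedFDerivWithin_mul_le (N := (⊤:ℕ∞)) hfs hgs hU.uniqueDiffOn hmem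
        (by exact_mod_cast le_top)).trans ?_
      apply le_of_eq
      apply Finset.sum_congr rfl
      intro i _
      rw [norm_iFDW_eq hU hmem, norm_iFDW_eq hU hmem]
    refine key.trans ?_
    rw [Finset.sum_mul]
    apply Finset.sum_le_sum
    intro i hi
    have hi' : i ≤ m := Nat.lt_succ_iff.mp (Finset.mem_range.mp hi)
    have hpow : lam⁻¹ ^ (a + i) * lam⁻¹ ^ (b + (m - i)) = lam⁻¹ ^ (a + b + m) := by
      rw [← pow_add]; congr 1; omega
    calc (m.choose i : ℝ) * ‖iteratedDeriv i f lam‖ * ‖iteratedDeriv (m - i) g lam‖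
        ≤ (m.choose i : ℝ) * (Cf i * lam⁻¹ ^ (a + i)) * (Cg (m - i) * lam⁻¹ ^ (b + (m - i))) := by
          have h1 := hCfb i hi' lam hlam
          have h2 := hCgb (m - i) (Nat.sub_le m i) lam hlam
          have hn1 : (0:ℝ) ≤ ‖iteratedDeriv i f lam‖ := norm_nonneg _
          have hn2 : (0:ℝ) ≤ ‖iteratedDeriv (m - i) g lam‖ := norm_nonneg _
          have hc : (0:ℝ) ≤ (m.choose i : ℝ) := by positivity
          apply mul_le_mul (mul_le_mul le_rfl h1 hn1 hc) h2 hn2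
          have := hCf0 i hi'
          positivity
      _ = (m.choose i : ℝ) * Cf i * Cg (m - i) * (lam⁻¹ ^ (a + i) * lam⁻¹ ^ (b + (m - i))) := by
          ring
      _ = (m.choose i : ℝ) * Cf i * Cg (m - i) * lam⁻¹ ^ (a + b + m) := by rw [hpow]

/-- iterated derivative of `l ↦ (2·i·l)⁻¹`. -/
lemma inv2il_iteratedDeriv (m : ℕ) :
    ∀ l : ℝ, 0 < l → iteratedDeriv m (fun x : ℝ => (2 * Complex.I * x)⁻¹) l
      = (∏ i ∈ Finset.range m, (-1 - i : ℂ)) * (2 * Complex.I)⁻¹ * (l : ℂ) ^ (-1 - m : ℤ) := by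
  induction m with
  | zero =>
    intro l hl
    have hl' : (l : ℂ) ≠ 0 := by exact_mod_cast hl.ne'
    simp [mul_inv, zpow_neg_one]
    ring
  | succ m ih =>
    intro l hl
    rw [iteratedDeriv_succ]
    have hev : iteratedDeriv m (fun x : ℝ => (2 * Complex.I * x)⁻¹) =ᶠ[nhds l]
        fun x : ℝ => (∏ i ∈ Finset.range m, (-1 - i : ℂ)) * (2 * Complex.I)⁻¹
          * (x : ℂ) ^ (-1 - m : ℤ) := by
      filter_upwards [IsOpen.mem_nhds isOpen_Ioi hl] with x hx
      exact ih x hx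
    rw [hev.deriv_eq]
    have hlne : (l : ℂ) ≠ 0 := by exact_mod_cast hl.ne'
    have hz : HasDerivAt (fun z : ℂ => z ^ (-1 - m : ℤ))
        ((-1 - m : ℤ) * (l : ℂ) ^ (-1 - m - 1 : ℤ)) (l : ℂ) :=
      hasDerivAt_zpow _ _ (Or.inl hlne)
    have hz' : HasDerivAt (fun x : ℝ => ((x : ℂ)) ^ (-1 - m : ℤ))
        ((-1 - m : ℤ) * (l : ℂ) ^ (-1 - m - 1 : ℤ)) l := hz.comp_ofReal
    have hfull : HasDerivAt (fun x : ℝ => (∏ i ∈ Finset.range m, (-1 - i : ℂ)) *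
        (2 * Complex.I)⁻¹ * (x : ℂ) ^ (-1 - m : ℤ))
        ((∏ i ∈ Finset.range m, (-1 - i : ℂ)) * (2 * Complex.I)⁻¹ *
          ((-1 - m : ℤ) * (l : ℂ) ^ (-1 - m - 1 : ℤ))) l := hz'.const_mul _
    rw [hfull.deriv]
    rw [Finset.prod_range_succ]
    push_cast
    ring_nf

lemma sy_inv2il {lam₀ : ℝ} (hlam₀ : 0 < lam₀) :
    Sy lam₀ 1 (fun x : ℝ => (2 * Complex.I * x)⁻¹) := by
  intro n m _
  refine ⟨‖∏ i ∈ Finset.range m, (-1 - i : ℂ)‖ * (1/2), by positivity, fun lam hlam => ?_⟩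
  have hl : (0:ℝ) < lam := lt_of_lt_of_le hlam₀ hlam
  rw [inv2il_iteratedDeriv m lam hl]
  have h2 : ‖(2 * Complex.I)⁻¹‖ = 1/2 := by
    rw [norm_inv]
    simp
  have h3 : ‖((lam : ℂ)) ^ (-1 - m : ℤ)‖ = lam⁻¹ ^ (1 + m) := by
    rw [norm_zpow]
    rw [Complex.norm_real, Real.norm_eq_abs, abs_of_pos hl]
    rw [show (-1 - (m:ℤ)) = -((1 + m : ℕ) : ℤ) by push_cast; ring]
    rw [zpow_neg, zpow_natCast, inv_pow]
  rw [norm_mul, norm_mul, h2, h3]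

end WronskianLargeEnergyAux

open WronskianLargeEnergyAux in
/-- Large-energy asymptotics of the Wronskian: under the large-energy Jost estimates
for `m_±(0,λ)` and `m_±'(0,λ)`, the Wronskian
`W(λ) = 2iλ m₋(0,λ)m₊(0,λ) + (m₋ m₊' − m₋' m₊)(0,λ)` satisfies
`1/W(λ) = (1/(2iλ))(1 + O_ℂ(λ^{−1}))` for `λ ≥ λ₀`, with symbol-type `O_ℂ`-term. -/
theorem wronskian_large_energy
    (lam₀ : ℝ) (hlam₀ : 0 < lam₀)
    (mp mpd mm mmd : ℝ → ℂ)
    (hmpsm : ContDiffOn ℝ (⊤ : ℕ∞) mp (Set.Ioi 0)) (hmpdsm : ContDiffOn ℝ (⊤ : ℕ∞) mpd (Set.Ioi 0))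
    (hmmsm : ContDiffOn ℝ (⊤ : ℕ∞) mm (Set.Ioi 0)) (hmmdsm : ContDiffOn ℝ (⊤ : ℕ∞) mmd (Set.Ioi 0))
    (Cb : ℕ → ℝ)
    (hmp : ∀ m : ℕ, ∀ lam ≥ lam₀,
      ‖iteratedDeriv m (fun l : ℝ => mp l - 1) lam‖ ≤ Cb m * lam⁻¹ ^ (1 + m))
    (hmm : ∀ m : ℕ, ∀ lam ≥ lam₀,
      ‖iteratedDeriv m (fun l : ℝ => mm l - 1) lam‖ ≤ Cb m * lam⁻¹ ^ (1 + m))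
    (hmpd : ∀ m : ℕ, ∀ lam ≥ lam₀,
      ‖iteratedDeriv m mpd lam‖ ≤ Cb m * lam⁻¹ ^ (1 + m))
    (hmmd : ∀ m : ℕ, ∀ lam ≥ lam₀,
      ‖iteratedDeriv m mmd lam‖ ≤ Cb m * lam⁻¹ ^ (1 + m))
    (W : ℝ → ℂ)
    (hW : ∀ lam : ℝ, W lam =
      2 * Complex.I * lam * mm lam * mp lam + (mm lam * mpd lam - mmd lam * mp lam))
    (hWne : ∀ lam ≥ lam₀, W lam ≠ 0) :
    ∃ E : ℝ → ℂ,
      (∀ lam ≥ lam₀, 1 / W lam = (1 / (2 * Complex.I * lam)) * (1 + E lam)) ∧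
      (∀ m : ℕ, ∃ C : ℝ, ∀ lam ≥ lam₀,
        ‖iteratedDeriv m E lam‖ ≤ C * lam⁻¹ ^ (1 + m)) := by

  classical
  set S : Set ℝ := Set.Ioi 0 with hSdef
  have hmps : ContDiffOn ℝ (⊤:ℕ∞) mp S := hmpsm.of_le (by simp)
  have hmpds : ContDiffOn ℝ (⊤:ℕ∞) mpd S := hmpdsm.of_le (by simp)
  have hmms : ContDiffOn ℝ (⊤:ℕ∞) mm S := hmmsm.of_le (by simp)
  have hmmds : ContDiffOn ℝ (⊤:ℕ∞) mmd S := hmmdsm.of_le (by simp)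
  have hsub : Set.Ici lam₀ ⊆ S := fun l hl => lt_of_lt_of_le hlam₀ hl
  have hIexp : ContDiffOn ℝ (⊤:ℕ∞) (fun l : ℝ => 2 * Complex.I * (l:ℂ)) S :=
    (contDiff_const.mul Complex.ofRealCLM.contDiff).contDiffOn
  have h2ilne : ∀ l : ℝ, 0 < l → (2 * Complex.I * (l:ℂ)) ≠ 0 := fun l hl =>
    mul_ne_zero (mul_ne_zero two_ne_zero Complex.I_ne_zero)
      (Complex.ofReal_ne_zero.mpr hl.ne')
  have hinv2s : ContDiffOn ℝ (⊤:ℕ∞) (fun l : ℝ => (2 * Complex.I * (l:ℂ))⁻¹) S :=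
    hIexp.inv (fun x hx => h2ilne x hx)
  -- basic symbol facts
  have syBase : ∀ (f : ℝ → ℂ), (∀ m : ℕ, ∀ lam ≥ lam₀,
      ‖iteratedDeriv m f lam‖ ≤ Cb m * lam⁻¹ ^ (1 + m)) → Sy lam₀ 1 f := by
    intro f hf n m _
    refine ⟨max (Cb m) 0, le_max_right _ _, fun lam hlam => ?_⟩
    have hl : (0:ℝ) < lam := lt_of_lt_of_le hlam₀ hlam
    refine (hf m lam hlam).trans ?_
    have hp : (0:ℝ) ≤ lam⁻¹ ^ (1 + m) := by positivity
    exact mul_le_mul_of_nonneg_right (le_max_left _ _) hp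
  have syMp : Sy lam₀ 1 (fun l => mp l - 1) := syBase _ hmp
  have syMm : Sy lam₀ 1 (fun l => mm l - 1) := syBase _ hmm
  have syMpd : Sy lam₀ 1 mpd := syBase _ hmpd
  have syMmd : Sy lam₀ 1 mmd := syBase _ hmmd
  have hs_mp1 : ContDiffOn ℝ (⊤:ℕ∞) (fun l => mp l - 1) S := hmps.sub contDiffOn_const
  have hs_mm1 : ContDiffOn ℝ (⊤:ℕ∞) (fun l => mm l - 1) S := hmms.sub contDiffOn_const
  -- products with the bounded factors
  have syMmMpd : Sy lam₀ 1 (fun l => mm l * mpd l) := by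
    intro n
    have e : (fun l => mm l * mpd l) = fun l => (mm l - 1) * mpd l + mpd l := by
      funext l; ring
    rw [e]
    refine syN_add isOpen_Ioi hsub (hs_mm1.mul hmpds) hmpds ?_ (syMpd n)
    exact syN_mono hlam₀ (by norm_num) (syN_mul hlam₀ isOpen_Ioi hsub hs_mm1 hmpds
      (syMm n) (syMpd n))
  have syMmdMp : Sy lam₀ 1 (fun l => mmd l * mp l) := by
    intro n
    have e : (fun l => mmd l * mp l) = fun l => mmd l * (mp l - 1) + mmd l := by
      funext l; ring
    rw [e]
    refine syN_add isOpen_Ioi hsub (hmmds.mul hs_mp1) hmmds ?_ (syMmd n)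
    exact syN_mono hlam₀ (by norm_num) (syN_mul hlam₀ isOpen_Ioi hsub hmmds hs_mp1
      (syMmd n) (syMp n))
  have hts : ContDiffOn ℝ (⊤:ℕ∞) (fun l => mm l * mpd l - mmd l * mp l) S :=
    (hmms.mul hmpds).sub (hmmds.mul hmps)
  have syT : Sy lam₀ 1 (fun l => mm l * mpd l - mmd l * mp l) := fun n =>
    syN_sub isOpen_Ioi hsub (hmms.mul hmpds) (hmmds.mul hmps) (syMmMpd n) (syMmdMp n)
  -- the symbol r
  set r : ℝ → ℂ := fun l => (mm l - 1) + (mp l - 1) + (mm l - 1) * (mp l - 1) +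
      (mm l * mpd l - mmd l * mp l) * (2 * Complex.I * (l:ℂ))⁻¹ with hrdef
  have hrs : ContDiffOn ℝ (⊤:ℕ∞) r S := by
    rw [hrdef]
    exact ((hs_mm1.add hs_mp1).add (hs_mm1.mul hs_mp1)).add (hts.mul hinv2s)
  have syR : Sy lam₀ 1 r := by
    rw [hrdef]
    intro n
    refine syN_add isOpen_Ioi hsub ((hs_mm1.add hs_mp1).add (hs_mm1.mul hs_mp1))
      (hts.mul hinv2s) ?_ ?_
    · refine syN_add isOpen_Ioi hsub (hs_mm1.add hs_mp1) (hs_mm1.mul hs_mp1) ?_ ?_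
      · exact syN_add isOpen_Ioi hsub hs_mm1 hs_mp1 (syMm n) (syMp n)
      · exact syN_mono hlam₀ (by norm_num) (syN_mul hlam₀ isOpen_Ioi hsub hs_mm1 hs_mp1
          (syMm n) (syMp n))
    · exact syN_mono hlam₀ (by norm_num) (syN_mul hlam₀ isOpen_Ioi hsub hts hinv2s
        (syT n) (sy_inv2il hlam₀ n))
  -- W in terms of r
  have hWr : ∀ l : ℝ, 0 < l → W l = 2 * Complex.I * (l:ℂ) * (1 + r l) := by
    intro l hl
    have h2 := h2ilne l hl
    have hl' : (l:ℂ) ≠ 0 := by exact_mod_cast hl.ne'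
    rw [hW l, hrdef]
    field_simp
    ring
  -- the open set U
  set U : Set ℝ := Set.Ioi 0 ∩ W ⁻¹' {0}ᶜ with hUdef
  have hWc : ContDiffOn ℝ (⊤:ℕ∞) W S := by
    refine ContDiffOn.congr ?_ (fun x _ => hW x)
    exact ((hIexp.mul hmms).mul hmps).add ((hmms.mul hmpds).sub (hmmds.mul hmps))
  have hUo : IsOpen U := hWc.continuousOn.isOpen_inter_preimage isOpen_Ioi
    isOpen_compl_singleton
  have hUsub : U ⊆ S := Set.inter_subset_left
  have hUl : Set.Ici lam₀ ⊆ U := fun l hl =>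
    ⟨lt_of_lt_of_le hlam₀ hl, by simpa using hWne l hl⟩
  have hmemU : ∀ l : ℝ, l ∈ U → 0 < l ∧ W l ≠ 0 := fun l hl => ⟨hl.1, by simpa using hl.2⟩
  -- the function E
  set E : ℝ → ℂ := fun l => 2 * Complex.I * (l:ℂ) / W l - 1 with hEdef
  have hEs : ContDiffOn ℝ (⊤:ℕ∞) E U := by
    have e : E = fun l : ℝ => 2 * Complex.I * (l:ℂ) * (W l)⁻¹ - 1 := by
      rw [hEdef]; funext l; rw [div_eq_mul_inv]
    rw [e]
    exact ((hIexp.mono hUsub).mul ((hWc.mono hUsub).inv (fun x hx => (hmemU x hx).2))).sub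
      contDiffOn_const
  -- the key algebraic identity on U
  have key2 : ∀ l ∈ U, (1 + E l) * (1 + r l) = 1 := by
    intro l hl
    obtain ⟨hl0, hWl⟩ := hmemU l hl
    have h2 := h2ilne l hl0
    have hwr := hWr l hl0
    rw [hEdef]
    have e1 : (1 + (2 * Complex.I * (l:ℂ) / W l - 1)) = 2 * Complex.I * (l:ℂ) / W l := by
      ring
    rw [e1, div_mul_eq_mul_div, ← hwr, div_self hWl]
  have h1rne : ∀ l ∈ U, (1 : ℂ) + r l ≠ 0 := fun l hl =>
    right_ne_zero_of_mul (a := 1 + E l) (by rw [key2 l hl]; exact one_ne_zero)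
  have hEeqOn : ∀ l ∈ U, E l = -(r l) - r l * E l := by
    intro l hl
    linear_combination key2 l hl
  -- uniform bound on 1 + E
  obtain ⟨C0, hC00, hC0b⟩ := sy_def syR 0
  have hrb : ∀ lam, lam₀ ≤ lam → ‖r lam‖ ≤ C0 * lam⁻¹ := by
    intro lam hlam
    have := hC0b lam hlam
    simpa using this
  set Lam : ℝ := max lam₀ (2 * C0 + 1) with hLamdef
  have hEb2 : ∀ lam, Lam ≤ lam → ‖1 + E lam‖ ≤ 2 := by
    intro lam hlam
    have hlam0 : lam₀ ≤ lam := le_trans (le_max_left _ _) hlam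
    have hUmem : lam ∈ U := hUl hlam0
    have hl0 : (0:ℝ) < lam := lt_of_lt_of_le hlam₀ hlam0
    have hr2 : ‖r lam‖ ≤ 1/2 := by
      refine (hrb lam hlam0).trans ?_
      have hlge : 2 * C0 + 1 ≤ lam := le_trans (le_max_right _ _) hlam
      have hC0le : C0 ≤ lam / 2 := by linarith
      calc C0 * lam⁻¹ ≤ (lam / 2) * lam⁻¹ := by
            have : (0:ℝ) ≤ lam⁻¹ := by positivity
            exact mul_le_mul_of_nonneg_right hC0le this
        _ = 1/2 := by field_simp
    have hnorm1r : (1:ℝ)/2 ≤ ‖(1:ℂ) + r lam‖ := by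
      have he : ((1:ℂ) + r lam) + (-(r lam)) = 1 := by ring
      have h1 : (1:ℝ) = ‖((1:ℂ) + r lam) + (-(r lam))‖ := by rw [he]; simp
      have h2 := norm_add_le ((1:ℂ) + r lam) (-(r lam))
      rw [norm_neg] at h2
      linarith [h1 ▸ h2]
    have hE1 : 1 + E lam = ((1:ℂ) + r lam)⁻¹ := eq_inv_of_mul_eq_one_left (key2 lam hUmem)
    rw [hE1, norm_inv]
    calc ‖(1:ℂ) + r lam‖⁻¹ ≤ ((1:ℝ)/2)⁻¹ := by
          apply inv_anti₀ (by norm_num) hnorm1r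
      _ = 2 := by norm_num
  have hcont : ContinuousOn (fun l => ‖(1:ℂ) + E l‖) U :=
    (continuousOn_const.add hEs.continuousOn).norm
  have hIccU : Set.Icc lam₀ Lam ⊆ U := fun l hl => hUl hl.1
  obtain ⟨x0, hx0mem, hx0max⟩ := isCompact_Icc.exists_isMaxOn
    (Set.nonempty_Icc.mpr (le_max_left lam₀ _)) (hcont.mono hIccU)
  set K : ℝ := max (‖(1:ℂ) + E x0‖) 2 with hKdef
  have hK : ∀ lam, lam₀ ≤ lam → ‖(1:ℂ) + E lam‖ ≤ K := by
    intro lam hlam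
    by_cases hcase : lam ≤ Lam
    · exact le_trans (hx0max ⟨hlam, hcase⟩) (le_max_left _ _)
    · exact le_trans (hEb2 lam (le_of_not_ge hcase)) (le_max_right _ _)
  have hK0 : (0:ℝ) ≤ K := le_trans (by norm_num) (le_max_right _ _)
  -- the derivative identity on U
  have hdE : Set.EqOn (deriv E) (fun l => -(deriv r l * ((1 + E l) * (1 + E l)))) U := by
    intro l hl
    have hrd : DifferentiableAt ℝ r l :=
      (hrs.contDiffAt (isOpen_Ioi.mem_nhds (hUsub hl))).differentiableAt
        (by simp)
    have hEd : DifferentiableAt ℝ E l :=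
      (hEs.contDiffAt (hUo.mem_nhds hl)).differentiableAt (by simp)
    have hev : E =ᶠ[nhds l] fun x => -(r x) - r x * E x :=
      Filter.eventuallyEq_of_mem (hUo.mem_nhds hl) (fun x hx => hEeqOn x hx)
    have hrhs : HasDerivAt (fun x => -(r x) - r x * E x)
        (-(deriv r l) - (deriv r l * E l + r l * deriv E l)) l :=
      (hrd.hasDerivAt.neg).sub (hrd.hasDerivAt.mul hEd.hasDerivAt)
    have heq : deriv E l = -(deriv r l) - (deriv r l * E l + r l * deriv E l) := by
      conv_lhs => rw [hev.deriv_eq, hrhs.deriv]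
    have hk := key2 l hl
    have hstep : deriv E l * (1 + r l) = -(deriv r l) * (1 + E l) := by
      linear_combination heq
    calc deriv E l = deriv E l * ((1 + E l) * (1 + r l)) := by rw [hk, mul_one]
      _ = (deriv E l * (1 + r l)) * (1 + E l) := by ring
      _ = (-(deriv r l) * (1 + E l)) * (1 + E l) := by rw [hstep]
      _ = -(deriv r l * ((1 + E l) * (1 + E l))) := by ring
  -- deriv r is a symbol of order 2
  have syDr : Sy lam₀ 2 (deriv r) := by
    intro n m _
    obtain ⟨C, hC0, hCb⟩ := sy_def syR (m + 1)
    refine ⟨C, hC0, fun lam hlam => ?_⟩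
    have e1 : iteratedDeriv m (deriv r) lam = iteratedDeriv (m + 1) r lam := by
      rw [iteratedDeriv_succ']
    rw [e1, show 2 + m = 1 + (m + 1) from by omega]
    exact hCb lam hlam
  have hdrs : ContDiffOn ℝ (⊤:ℕ∞) (deriv r) S := by
    refine hrs.deriv_of_isOpen isOpen_Ioi ?_
    exact_mod_cast le_rfl
  have hEsU1 : ContDiffOn ℝ (⊤:ℕ∞) (fun l => (1:ℂ) + E l) U := contDiffOn_const.add hEs
  -- order-0 estimates for 1 + E from order-1 estimates for E
  have hEplus : ∀ n, SyN lam₀ 1 E n → SyN lam₀ 0 (fun l => (1:ℂ) + E l) n := by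
    intro n hE m hm
    rcases Nat.eq_zero_or_pos m with hm0 | hmpos
    · subst hm0
      obtain ⟨C, hC0, hCb⟩ := hE 0 (Nat.zero_le n)
      refine ⟨1 + C * lam₀⁻¹, by positivity, fun lam hlam => ?_⟩
      have hl : (0:ℝ) < lam := lt_of_lt_of_le hlam₀ hlam
      have hEb : ‖E lam‖ ≤ C * lam⁻¹ := by
        have := hCb lam hlam
        simpa using this
      have hinv : lam⁻¹ ≤ lam₀⁻¹ := inv_anti₀ hlam₀ hlam
      have : ‖iteratedDeriv 0 (fun l => (1:ℂ) + E l) lam‖ = ‖(1:ℂ) + E lam‖ := by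
        simp
      rw [this]
      calc ‖(1:ℂ) + E lam‖ ≤ ‖(1:ℂ)‖ + ‖E lam‖ := norm_add_le _ _
        _ ≤ 1 + C * lam₀⁻¹ := by
            rw [norm_one]
            have : C * lam⁻¹ ≤ C * lam₀⁻¹ := mul_le_mul_of_nonneg_left hinv hC0
            linarith
        _ = (1 + C * lam₀⁻¹) * lam⁻¹ ^ (0 + 0) := by simp
    · obtain ⟨C, hC0, hCb⟩ := hE m hm
      refine ⟨C * lam₀⁻¹, by positivity, fun lam hlam => ?_⟩
      have hl : (0:ℝ) < lam := lt_of_lt_of_le hlam₀ hlam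
      have hmem : lam ∈ U := hUl hlam
      have e1 : iteratedDeriv m (fun l => (1:ℂ) + E l) lam = iteratedDeriv m E lam := by
        have h3 := iteratedDerivWithin_const_add hmpos (1:ℂ) (f := E) (s := U) (x := lam)
        rw [iteratedDerivWithin_of_isOpen' hUo hmem, iteratedDerivWithin_of_isOpen' hUo hmem]
          at h3
        exact h3
      rw [e1]
      have hinv : lam⁻¹ ≤ lam₀⁻¹ := inv_anti₀ hlam₀ hlam
      calc ‖iteratedDeriv m E lam‖ ≤ C * lam⁻¹ ^ (1 + m) := hCb lam hlam
        _ = C * (lam⁻¹ * lam⁻¹ ^ m) := by rw [pow_add, pow_one]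
        _ ≤ C * (lam₀⁻¹ * lam⁻¹ ^ m) := by
            have hp : (0:ℝ) ≤ lam⁻¹ ^ m := by positivity
            have := mul_le_mul_of_nonneg_right hinv hp
            exact mul_le_mul_of_nonneg_left this hC0
        _ = C * lam₀⁻¹ * lam⁻¹ ^ (0 + m) := by rw [zero_add]; ring
  -- the main induction
  have main : ∀ n, SyN lam₀ 1 E n := by
    intro n
    induction n with
    | zero =>
      intro m hm
      have hm0 : m = 0 := Nat.le_zero.mp hm
      subst hm0
      refine ⟨C0 * K, by positivity, fun lam hlam => ?_⟩
      have hmem : lam ∈ U := hUl hlam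
      have hE0 : E lam = -(r lam) * (1 + E lam) := by
        linear_combination key2 lam hmem
      have hl : (0:ℝ) < lam := lt_of_lt_of_le hlam₀ hlam
      have : ‖iteratedDeriv 0 E lam‖ = ‖E lam‖ := by simp
      rw [this, hE0, norm_mul, norm_neg]
      calc ‖r lam‖ * ‖1 + E lam‖ ≤ (C0 * lam⁻¹) * K := by
            apply mul_le_mul (hrb lam hlam) (hK lam hlam) (norm_nonneg _) (by positivity)
        _ = C0 * K * lam⁻¹ ^ (1 + 0) := by ring
    | succ n IH =>
      intro m hm
      by_cases hmn : m ≤ n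
      · exact IH m hmn
      · have hmeq : m = n + 1 := by omega
        subst hmeq
        have h1 : SyN lam₀ 0 (fun l => (1:ℂ) + E l) n := hEplus n IH
        have h2 : SyN lam₀ 0 (fun l => ((1:ℂ) + E l) * ((1:ℂ) + E l)) n := by
          have := syN_mul hlam₀ hUo hUl hEsU1 hEsU1 h1 h1
          simpa using this
        have hF : SyN lam₀ 2
            (fun l => -(deriv r l * (((1:ℂ) + E l) * ((1:ℂ) + E l)))) n := by
          apply syN_neg
          have := syN_mul hlam₀ hUo hUl (hdrs.mono hUsub) (hEsU1.mul hEsU1)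
            (syDr.syN n) h2
          simpa using this
        obtain ⟨C, hC0, hCb⟩ := hF n le_rfl
        refine ⟨C, hC0, fun lam hlam => ?_⟩
        have hmem : lam ∈ U := hUl hlam
        have e1 : iteratedDeriv (n + 1) E lam =
            iteratedDeriv n (fun l => -(deriv r l * (((1:ℂ) + E l) * ((1:ℂ) + E l)))) lam := by
          rw [iteratedDeriv_succ']
          exact Set.EqOn.iteratedDeriv_of_isOpen hdE hUo n hmem
        rw [e1, show 1 + (n + 1) = 2 + n from by omega]
        exact hCb lam hlam
  -- conclusion
  refine ⟨E, ?_, ?_⟩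
  · intro lam hlam
    have hl : (0:ℝ) < lam := lt_of_lt_of_le hlam₀ hlam
    have h2 := h2ilne lam hl
    have hw := hWne lam hlam
    have hl' : (lam:ℂ) ≠ 0 := by exact_mod_cast hl.ne'
    rw [hEdef]
    field_simp
    ring
  · intro m
    obtain ⟨C, _, hCb⟩ := main m m le_rfl
    exact ⟨C, fun lam hlam => hCb lam hlam⟩
end
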